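/- arXiv:1412.5652 — 6 statements merged into one kernel-verified Lean document; each statement's English description precedes it below -/
import Mathlib

section
/- Let M be a topological space and suppose d is finite-valued (d a b < ⊤ for all a, b ∈ M) and satisfies the push-up property: for every s ∈ M, every w in the topological closure of I⁺({s}), and every z ∈ M with w ≪ z, one has d w z ≤ d s z. Then for every finite subset S ⊆ M and every future divergent sequence (x_i) there exists N ∈ ℕ such that x_j ∉ closure(I⁺(S)) for all j ≥ N. -/
/-!
Since the closure of a finite union is the union of the closures, push-up gives, for every `w` in
`closure I⁺(S)` with `w ≪ p`, some `s ∈ S` with `d w p ≤ d s p < ⊤`. Along a future divergent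
sequence `d (x i) p → ⊤`, so eventually `d (x i) p` exceeds every `d s p`, and `x i` cannot lie
in `closure I⁺(S)`.
-/

open Filter Topology

theorem exists_le_of_mem_closure_chronologicalFuture {M : Type*} [TopologicalSpace M]
    {d : M → M → ENNReal}
    (hpush : ∀ s w z : M, w ∈ closure {p : M | 0 < d s p} → 0 < d w z → d w z ≤ d s z)
    {S : Set M} (hS : S.Finite) {w z : M} (hw : w ∈ closure {y : M | ∃ s ∈ S, 0 < d s y})
    (hwz : 0 < d w z) : ∃ s ∈ S, d w z ≤ d s z := by
  have hunion : {y : M | ∃ s ∈ S, 0 < d s y} = ⋃ s ∈ S, {y : M | 0 < d s y} := by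
    ext y
    simp
  rw [hunion, hS.closure_biUnion, Set.mem_iUnion₂] at hw
  obtain ⟨s, hs, hws⟩ := hw
  exact ⟨s, hs, hpush s w z hws hwz⟩

/-- abstract form of Lemma 3.4.
Assume `M` is a topological space, `d` is finite-valued and satisfies the
push-up property: for all `s`, all `w ∈ closure (I⁺({s}))` and all `z` with
`w ≪ z`, `d w z ≤ d s z`. Then for every finite `S ⊆ M` and every future
divergent sequence `(x_i)` there is `N` with `x_j ∉ closure (I⁺(S))` for all
`j ≥ N`. -/
theorem stmt_3 {M : Type*} [TopologicalSpace M] (d : M → M → ENNReal)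
    (hfin : ∀ a b : M, d a b < ⊤)
    (hpush : ∀ s w z : M, w ∈ closure {p : M | 0 < d s p} → 0 < d w z → d w z ≤ d s z)
    (S : Set M) (hSfin : S.Finite) (x : ℕ → M)
    (hx : ∃ p : M, Tendsto (fun i => d (x i) p) atTop (𝓝 ⊤)) :
    ∃ N : ℕ, ∀ j ≥ N, x j ∉ closure {y : M | ∃ s ∈ S, 0 < d s y} := by
  obtain ⟨p, hp⟩ := hx
  have hpos : ∀ᶠ i in atTop, 0 < d (x i) p :=
    hp.eventually (eventually_gt_nhds ENNReal.zero_lt_top)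
  have hdom : ∀ᶠ i in atTop, ∀ s ∈ S, d s p < d (x i) p :=
    hSfin.eventually_all.2 fun s _ => hp.eventually (eventually_gt_nhds (hfin s p))
  obtain ⟨N, hN⟩ := (hpos.and hdom).exists_forall_of_atTop
  refine ⟨N, fun j hj hmem => ?_⟩
  obtain ⟨s, hs, hle⟩ :=
    exists_le_of_mem_closure_chronologicalFuture hpush hSfin hmem (hN j hj).1
  exact (hle.trans_lt ((hN j hj).2 s hs)).false
end

section
/- Suppose d satisfies the reverse triangle inequality. Let S ⊆ M and let (x_i) be a future divergent sequence with F_{(x_i)} ∩ S ≠ ∅. Then there exists N ∈ ℕ such that x_j ∈ I⁻(S) for all j ≥ N. -/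
open Filter Topology

theorem pos_trans_of_reverse_triangle {M : Type*} (d : M → M → ENNReal)
    (hrev : ∀ x y z : M, 0 < d x y → 0 < d y z → d x y + d y z ≤ d x z)
    {x y z : M} (hxy : 0 < d x y) (hyz : 0 < d y z) : 0 < d x z :=
  hyz.trans_le (le_add_self.trans (hrev x y z hxy hyz))

theorem stmt_4_general {M : Type*} (d : M → M → ENNReal)
    (hrev : ∀ x y z : M, 0 < d x y → 0 < d y z → d x y + d y z ≤ d x z)
    (S : Set M) (x : ℕ → M)
    (hint : ({y : M | ∃ s ∈ {p : M | Tendsto (fun i => d (x i) p) atTop (𝓝 ⊤)},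
        0 < d s y} ∩ S).Nonempty) :
    ∃ N : ℕ, ∀ j ≥ N, x j ∈ {y : M | ∃ s ∈ S, 0 < d y s} := by
  obtain ⟨y, ⟨s, hs, hsy⟩, hyS⟩ := hint
  obtain ⟨N, hN⟩ :=
    (hs.eventually (eventually_gt_nhds ENNReal.zero_lt_top)).exists_forall_of_atTop
  exact ⟨N, fun j hj => ⟨y, hyS, pos_trans_of_reverse_triangle d hrev (hN j hj) hsy⟩⟩

/-- abstract form of Lemma 3.5.
If `d` satisfies the reverse triangle inequality, `(x_i)` is future divergent
and `F_{(x_i)} ∩ S ≠ ∅`, then there is `N` with `x_j ∈ I⁻(S)` for all `j ≥ N`. -/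
theorem stmt_4 {M : Type*} (d : M → M → ENNReal)
    (hrev : ∀ x y z : M, 0 < d x y → 0 < d y z → d x y + d y z ≤ d x z)
    (S : Set M) (x : ℕ → M)
    (hx : ∃ p : M, Tendsto (fun i => d (x i) p) atTop (𝓝 ⊤))
    (hint : ({y : M | ∃ s ∈ {p : M | Tendsto (fun i => d (x i) p) atTop (𝓝 ⊤)},
        0 < d s y} ∩ S).Nonempty) :
    ∃ N : ℕ, ∀ j ≥ N, x j ∈ {y : M | ∃ s ∈ S, 0 < d y s} :=
  stmt_4_general d hrev S x hint
end

section
/- Assume d is finite-valued (d a b < ⊤ for all a, b ∈ M). Let S ⊆ M be achronal and suppose there is a hatting H with H ⊆ S. Then for every x ∈ M, d(S,x) < ⊤ and d(x,S) < ⊤. -/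
open Filter Topology

open scoped ENNReal

theorem exists_seq_mem_tendsto_top_of_biSup_eq_top {ι : Type*} {S : Set ι} {f : ι → ℝ≥0∞}
    (h : ⨆ s ∈ S, f s = ⊤) :
    ∃ u : ℕ → ι, (∀ n, u n ∈ S) ∧ Tendsto (fun n => f (u n)) atTop (𝓝 ⊤) := by
  have hlarge (n : ℕ) : ∃ s ∈ S, (n : ℝ≥0∞) < f s := by
    have hn : (n : ℝ≥0∞) < ⨆ s ∈ S, f s := h ▸ ENNReal.natCast_lt_top n
    simpa only [lt_iSup_iff, exists_prop] using hn
  choose u hmem hlt using hlarge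
  refine ⟨u, hmem, ENNReal.tendsto_nhds_top fun n => eventually_atTop.2 ⟨n, fun i hi => ?_⟩⟩
  exact lt_of_le_of_lt (by exact_mod_cast hi) (hlt i)

theorem biSup_dist_lt_top_of_hatting {M : Type*} {d : M → M → ℝ≥0∞} {S H : Set M}
    (hHS : H ⊆ S) (hSach : ∀ s ∈ S, ∀ s' ∈ S, ¬ 0 < d s s')
    (hHfut : ∀ x : ℕ → M, (∃ p : M, Tendsto (fun i => d (x i) p) atTop (𝓝 ⊤)) →
      ∃ N : ℕ, ∀ j ≥ N, x j ∈ {y : M | ∃ s ∈ H, 0 < d y s})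
    (x : M) : ⨆ s ∈ S, d s x < ⊤ := by
  refine lt_top_iff_ne_top.2 fun h => ?_
  obtain ⟨u, huS, hu⟩ := exists_seq_mem_tendsto_top_of_biSup_eq_top h
  obtain ⟨N, hN⟩ := hHfut u ⟨x, hu⟩
  obtain ⟨s, hsH, hpos⟩ := hN N le_rfl
  exact hSach (u N) (huS N) s (hHS hsH) hpos

theorem stmt_5_general {M : Type*} (d : M → M → ENNReal)
    (S : Set M) (hSach : ∀ s ∈ S, ∀ s' ∈ S, ¬ 0 < d s s')
    (H : Set M) (hHS : H ⊆ S)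
    (hHfut : ∀ x : ℕ → M, (∃ p : M, Tendsto (fun i => d (x i) p) atTop (𝓝 ⊤)) →
      ∃ N : ℕ, ∀ j ≥ N, x j ∈ {y : M | ∃ s ∈ H, 0 < d y s})
    (hHpast : ∀ x : ℕ → M, (∃ p : M, Tendsto (fun i => d p (x i)) atTop (𝓝 ⊤)) →
      ∃ N : ℕ, ∀ j ≥ N, x j ∈ {y : M | ∃ s ∈ H, 0 < d s y}) :
    ∀ x : M, (⨆ s ∈ S, d s x) < ⊤ ∧ (⨆ s ∈ S, d x s) < ⊤ := fun x =>
  ⟨biSup_dist_lt_top_of_hatting hHS hSach hHfut x,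
    biSup_dist_lt_top_of_hatting (d := fun a b => d b a) hHS
      (fun s hs s' hs' => hSach s' hs' s hs) hHpast x⟩

/-- abstract finiteness content of Lemma 3.12.
Assume `d` is finite-valued, `S` is achronal and there is a hatting `H ⊆ S`
(`H` achronal, every future divergent sequence is eventually in `I⁻(H)`,
every past divergent sequence is eventually in `I⁺(H)`). Then for every
`x ∈ M`, `d(S,x) < ⊤` and `d(x,S) < ⊤`. -/
theorem stmt_5 {M : Type*} (d : M → M → ENNReal)
    (hfin : ∀ a b : M, d a b < ⊤)
    (S : Set M) (hSach : ∀ s ∈ S, ∀ s' ∈ S, ¬ 0 < d s s')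
    (H : Set M) (hHS : H ⊆ S)
    (hHach : ∀ s ∈ H, ∀ s' ∈ H, ¬ 0 < d s s')
    (hHfut : ∀ x : ℕ → M, (∃ p : M, Tendsto (fun i => d (x i) p) atTop (𝓝 ⊤)) →
      ∃ N : ℕ, ∀ j ≥ N, x j ∈ {y : M | ∃ s ∈ H, 0 < d y s})
    (hHpast : ∀ x : ℕ → M, (∃ p : M, Tendsto (fun i => d p (x i)) atTop (𝓝 ⊤)) →
      ∃ N : ℕ, ∀ j ≥ N, x j ∈ {y : M | ∃ s ∈ H, 0 < d s y}) :
    ∀ x : M, (⨆ s ∈ S, d s x) < ⊤ ∧ (⨆ s ∈ S, d x s) < ⊤ :=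
  stmt_5_general d S hSach H hHS hHfut hHpast
end

section
/- Let f : M → ℝ satisfy the flip condition. Let r ∈ ℝ, set H = f⁻¹({r}), and assume M = I⁺(H) ∪ H ∪ I⁻(H). Then H is a hatting: H is achronal, every future divergent sequence eventually lies in I⁻(H) (there is N with x_j ∈ I⁻(H) for all j ≥ N), and every past divergent sequence eventually lies in I⁺(H). -/
open Filter Topology

/-!
Under the flip condition `f` increases strictly along `≪`, and `d x p ≤ f p - f x`, so
`d x p → ⊤` forces `f x → -∞` (dually `d p x → ⊤` forces `f x → +∞`). Hence the level set
`f⁻¹{r}` is achronal, and a divergent sequence eventually leaves `f⁻¹{r}` and the side of it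
where `f` is too large; by the decomposition `M = I⁺ ∪ H ∪ I⁻` it lies in the remaining part.
-/

/-- `I⁺(S)`. -/
def chronoFuture {M : Type*} (d : M → M → ENNReal) (S : Set M) : Set M :=
  {y | ∃ s ∈ S, 0 < d s y}

/-- `I⁻(S)`. -/
def chronoPast {M : Type*} (d : M → M → ENNReal) (S : Set M) : Set M :=
  {y | ∃ s ∈ S, 0 < d y s}

def FlipCondition {M : Type*} (d : M → M → ENNReal) (f : M → ℝ) : Prop :=
  ∀ x y : M, 0 < d x y → d x y ≤ ENNReal.ofReal (f y - f x)

namespace FlipCondition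

variable {M : Type*} {d : M → M → ENNReal} {f : M → ℝ} {r : ℝ}

theorem lt_sub_of_ofReal_lt (hf : FlipCondition d f) {x y : M} {c : ℝ}
    (h : ENNReal.ofReal c < d x y) : c < f y - f x :=
  (ENNReal.ofReal_lt_ofReal_iff'.mp (h.trans_le (hf x y (zero_le.trans_lt h)))).1

theorem lt_of_pos (hf : FlipCondition d f) {x y : M} (h : 0 < d x y) : f x < f y :=
  sub_pos.mp (hf.lt_sub_of_ofReal_lt (c := 0) (by rwa [ENNReal.ofReal_zero]))

theorem eventually_lt_of_tendsto_top {ι : Type*} {l : Filter ι} (hf : FlipCondition d f)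
    {x : ι → M} {p : M} (hx : Tendsto (fun i => d (x i) p) l (𝓝 ⊤)) (c : ℝ) :
    ∀ᶠ i in l, f (x i) < c := by
  filter_upwards [hx.eventually (lt_mem_nhds (ENNReal.ofReal_lt_top (r := f p - c)))] with i hi
  linarith [hf.lt_sub_of_ofReal_lt hi]

theorem eventually_gt_of_tendsto_top {ι : Type*} {l : Filter ι} (hf : FlipCondition d f)
    {x : ι → M} {p : M} (hx : Tendsto (fun i => d p (x i)) l (𝓝 ⊤)) (c : ℝ) :
    ∀ᶠ i in l, c < f (x i) := by
  filter_upwards [hx.eventually (lt_mem_nhds (ENNReal.ofReal_lt_top (r := c - f p)))] with i hi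
  linarith [hf.lt_sub_of_ofReal_lt hi]

theorem not_pos_of_eq (hf : FlipCondition d f) {s s' : M} (hs : f s = r) (hs' : f s' = r) :
    ¬ 0 < d s s' :=
  fun h => (hf.lt_of_pos h).ne (hs.trans hs'.symm)

theorem lt_of_mem_chronoFuture (hf : FlipCondition d f) {y : M}
    (hy : y ∈ chronoFuture d (f ⁻¹' {r})) : r < f y := by
  obtain ⟨s, rfl, hsy⟩ := hy
  exact hf.lt_of_pos hsy

theorem gt_of_mem_chronoPast (hf : FlipCondition d f) {y : M}
    (hy : y ∈ chronoPast d (f ⁻¹' {r})) : f y < r := by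
  obtain ⟨s, rfl, hys⟩ := hy
  exact hf.lt_of_pos hys

theorem mem_chronoPast_of_lt (hf : FlipCondition d f) (hcover : ∀ x : M,
    x ∈ chronoFuture d (f ⁻¹' {r}) ∨ x ∈ f ⁻¹' {r} ∨ x ∈ chronoPast d (f ⁻¹' {r}))
    {y : M} (hy : f y < r) : y ∈ chronoPast d (f ⁻¹' {r}) := by
  rcases hcover y with h | h | h
  · exact absurd (hf.lt_of_mem_chronoFuture h) hy.not_gt
  · exact absurd h hy.ne
  · exact h

theorem mem_chronoFuture_of_gt (hf : FlipCondition d f) (hcover : ∀ x : M,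
    x ∈ chronoFuture d (f ⁻¹' {r}) ∨ x ∈ f ⁻¹' {r} ∨ x ∈ chronoPast d (f ⁻¹' {r}))
    {y : M} (hy : r < f y) : y ∈ chronoFuture d (f ⁻¹' {r}) := by
  rcases hcover y with h | h | h
  · exact h
  · exact absurd h hy.ne'
  · exact absurd (hf.gt_of_mem_chronoPast h) hy.not_gt

end FlipCondition

/-- abstract form of Proposition 4.2.
If `f` satisfies the flip condition and `H = f⁻¹({r})` satisfies
`M = I⁺(H) ∪ H ∪ I⁻(H)`, then `H` is a hatting: `H` is achronal, every
future divergent sequence is eventually in `I⁻(H)`, and every past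
divergent sequence is eventually in `I⁺(H)`. -/
theorem stmt_7 {M : Type*} (d : M → M → ENNReal) (f : M → ℝ)
    (hflip : ∀ x y : M, 0 < d x y → d x y ≤ ENNReal.ofReal (f y - f x))
    (r : ℝ) (H : Set M) (hH : H = f ⁻¹' {r})
    (hcover : ∀ x : M,
      x ∈ {y : M | ∃ s ∈ H, 0 < d s y} ∨ x ∈ H ∨ x ∈ {y : M | ∃ s ∈ H, 0 < d y s}) :
    (∀ s ∈ H, ∀ s' ∈ H, ¬ 0 < d s s') ∧
    (∀ x : ℕ → M, (∃ p : M, Tendsto (fun i => d (x i) p) atTop (𝓝 ⊤)) →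
      ∃ N : ℕ, ∀ j ≥ N, x j ∈ {y : M | ∃ s ∈ H, 0 < d y s}) ∧
    (∀ x : ℕ → M, (∃ p : M, Tendsto (fun i => d p (x i)) atTop (𝓝 ⊤)) →
      ∃ N : ℕ, ∀ j ≥ N, x j ∈ {y : M | ∃ s ∈ H, 0 < d s y}) := by
  subst hH
  have hf : FlipCondition d f := hflip
  refine ⟨fun s hs s' hs' => hf.not_pos_of_eq hs hs', ?_, ?_⟩
  · rintro x ⟨p, hp⟩
    obtain ⟨N, hN⟩ := (hf.eventually_lt_of_tendsto_top hp r).exists_forall_of_atTop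
    exact ⟨N, fun j hj => hf.mem_chronoPast_of_lt hcover (hN j hj)⟩
  · rintro x ⟨p, hp⟩
    obtain ⟨N, hN⟩ := (hf.eventually_gt_of_tendsto_top hp r).exists_forall_of_atTop
    exact ⟨N, fun j hj => hf.mem_chronoFuture_of_gt hcover (hN j hj)⟩
end

section
/- Let M be a topological space, R : M → M → Prop a relation, and f : M → ℝ a function such that f(a) ≤ f(b) whenever R a b. Let x ∈ M and let γ : ℝ → M satisfy γ(0) = x. Assume that f ∘ γ is continuous at 0 and that for every t ∈ (0,1] the set {y ∈ M : R (γ(−t)) y and R y (γ(t))} is a neighbourhood of x. Then f is continuous at x. -/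
/-!
For every small `t > 0`, monotonicity squeezes `f` on a neighbourhood of `x` between
`f (γ (-t))` and `f (γ t)`, and both bounds tend to `f x` as `t → 0⁺`.
-/

open Filter Topology

theorem Filter.Tendsto.of_eventually_mem_Icc {ι X α : Type*} [TopologicalSpace α] [Preorder α]
    [OrderTopology α] {l : Filter ι} [l.NeBot] {lx : Filter X} {f : X → α} {a b : ι → α} {c : α}
    (ha : Tendsto a l (𝓝 c)) (hb : Tendsto b l (𝓝 c))
    (hab : ∀ᶠ i in l, ∀ᶠ y in lx, f y ∈ Set.Icc (a i) (b i)) :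
    Tendsto f lx (𝓝 c) := by
  refine tendsto_order.2 ⟨fun c' hc' => ?_, fun c' hc' => ?_⟩
  · obtain ⟨i, hai, hi⟩ := ((tendsto_order.1 ha).1 c' hc' |>.and hab).exists
    exact hi.mono fun y hy => hai.trans_le hy.1
  · obtain ⟨i, hbi, hi⟩ := ((tendsto_order.1 hb).2 c' hc' |>.and hab).exists
    exact hi.mono fun y hy => hy.2.trans_lt hbi

/-- abstract form of Proposition A.1.
If `f` is monotone for the relation `R`, `γ` is a curve through `x = γ 0`
such that `f ∘ γ` is continuous at `0`, and for every `t ∈ (0,1]` the set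
`{y | R (γ (-t)) y ∧ R y (γ t)}` is a neighbourhood of `x`, then `f` is
continuous at `x`. -/
theorem stmt_8 {M : Type*} [TopologicalSpace M] (R : M → M → Prop) (f : M → ℝ)
    (hmono : ∀ a b : M, R a b → f a ≤ f b)
    (x : M) (γ : ℝ → M) (hγ0 : γ 0 = x)
    (hcont : ContinuousAt (f ∘ γ) 0)
    (hnbhd : ∀ t ∈ Set.Ioc (0 : ℝ) 1, {y : M | R (γ (-t)) y ∧ R y (γ t)} ∈ 𝓝 x) :
    ContinuousAt f x := by
  have hfγ : Tendsto (f ∘ γ) (𝓝 0) (𝓝 (f x)) := by simpa [hγ0] using hcont.tendsto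
  have hneg : Tendsto (fun t : ℝ => -t) (𝓝[>] 0) (𝓝 0) := by
    simpa using (continuous_neg.tendsto (0 : ℝ)).mono_left nhdsWithin_le_nhds
  refine (hfγ.comp hneg).of_eventually_mem_Icc (b := f ∘ γ)
    (hfγ.mono_left nhdsWithin_le_nhds) ?_
  filter_upwards [Ioc_mem_nhdsGT one_pos] with t ht
  filter_upwards [hnbhd t ht] with y hy
  exact ⟨hmono _ _ hy.1, hmono _ _ hy.2⟩
end

section
/- Let p ∈ V satisfy η(p,z) ≥ √(−η(z,z)) for every future-directed timelike vector z ∈ V (i.e. for every z with η(z,z) < 0 and z₀ > 0). Then p₀ ≤ −1 and η(p,p) ≤ −1; that is, p is a past-directed timelike vector with −η(p,p) ≥ 1. -/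
/-!
Test the hypothesis against the point `z = (s, -u)` of the future unit hyperboloid
`η(z,z) = -1`, where `u` is the spatial part of `p` and `s = √(1 + ‖u‖²)`. It reads
`1 ≤ η(p,z) = -p₀ s - ‖u‖²`, i.e. `p₀ ≤ -s`; since `s ≥ 1` and `s² = 1 + ‖u‖²`, this gives
both `p₀ ≤ -1` and `η(p,p) = -p₀² + ‖u‖² ≤ -s² + ‖u‖² = -1`.
-/

/-- The Minkowski bilinear form on `ℝ × EuclideanSpace ℝ (Fin n)`:
`η((a,u),(b,v)) = -a*b + ⟪u,v⟫`. -/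
noncomputable def minkowski {n : ℕ} (p q : ℝ × EuclideanSpace ℝ (Fin n)) : ℝ :=
  -(p.1 * q.1) + inner ℝ p.2 q.2

section Hyperboloid

variable {n : ℕ}

theorem minkowski_self (p : ℝ × EuclideanSpace ℝ (Fin n)) :
    minkowski p p = -p.1 ^ 2 + ‖p.2‖ ^ 2 := by
  rw [minkowski, real_inner_self_eq_norm_sq]
  ring

noncomputable def hyperboloidLift (u : EuclideanSpace ℝ (Fin n)) :
    ℝ × EuclideanSpace ℝ (Fin n) :=
  (√(1 + ‖u‖ ^ 2), u)

theorem hyperboloidLift_fst_pos (u : EuclideanSpace ℝ (Fin n)) :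
    0 < (hyperboloidLift u).1 :=
  Real.sqrt_pos.mpr (by positivity)

theorem minkowski_hyperboloidLift_self (u : EuclideanSpace ℝ (Fin n)) :
    minkowski (hyperboloidLift u) (hyperboloidLift u) = -1 := by
  rw [minkowski_self, hyperboloidLift, Real.sq_sqrt (by positivity)]
  ring

theorem minkowski_hyperboloidLift_neg_snd (p : ℝ × EuclideanSpace ℝ (Fin n)) :
    minkowski p (hyperboloidLift (-p.2)) = -(p.1 * √(1 + ‖p.2‖ ^ 2)) - ‖p.2‖ ^ 2 := by
  rw [minkowski, hyperboloidLift, norm_neg, inner_neg_right, real_inner_self_eq_norm_sq]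
  ring

theorem fst_le_neg_sqrt_of_forall_sqrt_le_minkowski {p : ℝ × EuclideanSpace ℝ (Fin n)}
    (hp : ∀ z : ℝ × EuclideanSpace ℝ (Fin n), minkowski z z < 0 → 0 < z.1 →
      √(-minkowski z z) ≤ minkowski p z) :
    p.1 ≤ -√(1 + ‖p.2‖ ^ 2) := by
  set s := √(1 + ‖p.2‖ ^ 2)
  have hs : 0 < s := Real.sqrt_pos.mpr (by positivity)
  have hs_sq : s ^ 2 = 1 + ‖p.2‖ ^ 2 := Real.sq_sqrt (by positivity)
  have htest := hp (hyperboloidLift (-p.2))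
    (by rw [minkowski_hyperboloidLift_self]; norm_num) (hyperboloidLift_fst_pos _)
  rw [minkowski_hyperboloidLift_self, neg_neg, Real.sqrt_one,
    minkowski_hyperboloidLift_neg_snd] at htest
  have hmul : p.1 * s ≤ -s * s := by nlinarith
  exact le_of_mul_le_mul_right hmul hs

end Hyperboloid

theorem stmt_10_general {n : ℕ} (p : ℝ × EuclideanSpace ℝ (Fin n))
    (hp : ∀ z : ℝ × EuclideanSpace ℝ (Fin n), minkowski z z < 0 → 0 < z.1 →
      Real.sqrt (-minkowski z z) ≤ minkowski p z) :
    p.1 ≤ -1 ∧ minkowski p p ≤ -1 := by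
  have hp₀ := fst_le_neg_sqrt_of_forall_sqrt_le_minkowski hp
  have hs_one : 1 ≤ √(1 + ‖p.2‖ ^ 2) := Real.one_le_sqrt.mpr (by linarith [sq_nonneg ‖p.2‖])
  have hs_sq : √(1 + ‖p.2‖ ^ 2) ^ 2 = 1 + ‖p.2‖ ^ 2 := Real.sq_sqrt (by positivity)
  refine ⟨hp₀.trans (neg_le_neg hs_one), ?_⟩
  rw [minkowski_self]
  nlinarith

/-- pointwise content of the forward direction of
Proposition 2.14. If `η(p,z) ≥ √(-η(z,z))` for every future-directed
timelike `z`, then `p₀ ≤ -1` and `η(p,p) ≤ -1`, i.e. `p` is past-directed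
timelike with `-η(p,p) ≥ 1`. -/
theorem stmt_10 {n : ℕ} (hn : 1 ≤ n) (p : ℝ × EuclideanSpace ℝ (Fin n))
    (hp : ∀ z : ℝ × EuclideanSpace ℝ (Fin n), minkowski z z < 0 → 0 < z.1 →
      Real.sqrt (-minkowski z z) ≤ minkowski p z) :
    p.1 ≤ -1 ∧ minkowski p p ≤ -1 :=
  stmt_10_general p hp
end
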